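/- Let 1 ≤ k ≤ m ≤ d and ε > 0. Then there exists δ = δ(ε) > 0 such that for every V ∈ Gr_m(d) and every orthonormal set {u_1,...,u_k} ⊆ ℝ^d with κ(V^⊥, span{u_1,...,u_k}) ≥ ε, one has ‖Λ^k π_V (u_1 ∧ ... ∧ u_k)‖ ≥ δ, where π_V is the orthogonal projection onto V composed with an isometric identification V ≅ ℝ^m, and Λ^k π_V is the induced map on k-th exterior powers. -/

import Mathlib

/-!
Write `P_V` for the orthogonal projection onto `V`. For a unit vector `w ∈ U` outside `V`, the
normalization of `w - P_V w` is a unit vector of `Vᗮ` within `2‖P_V w‖` of `w`, and projections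
onto the lines through unit vectors `a`, `b` are `2‖a - b‖`-close in operator norm; hence
`κ(Vᗮ, U) ≤ 4‖P_V w‖`. So `‖P_V w‖ ≥ t‖w‖` on `U = span u` with `t = min (ε/4) 1`. As `u` is
orthonormal, the Gram matrix of the `P_V uᵢ` then has quadratic form at least `t²|x|²`, so its
eigenvalues are at least `t²` and its determinant at least `t^(2k)`.
-/

/-- The orthogonal projection onto a subspace `K` of `ℝ^d`, as an endomorphism of `ℝ^d`. -/
noncomputable def projL {d : ℕ} (K : Submodule ℝ (EuclideanSpace ℝ (Fin d))) :
    EuclideanSpace ℝ (Fin d) →L[ℝ] EuclideanSpace ℝ (Fin d) :=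
  K.subtypeL.comp (K.orthogonalProjectionOnto)

/-- `κ(V₁,V₂)`: the infimum over lines `L₁ ⊆ V₁`, `L₂ ⊆ V₂` of the projective distance
`‖P_{L₁} − P_{L₂}‖_op`. -/
noncomputable def kappa {d : ℕ} (V₁ V₂ : Submodule ℝ (EuclideanSpace ℝ (Fin d))) : ℝ :=
  ⨅ p : {L : Submodule ℝ (EuclideanSpace ℝ (Fin d)) // L ≤ V₁ ∧ Module.finrank ℝ L = 1} ×
      {L : Submodule ℝ (EuclideanSpace ℝ (Fin d)) // L ≤ V₂ ∧ Module.finrank ℝ L = 1},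
    ‖projL p.1.1 - projL p.2.1‖

open Matrix Submodule
open scoped InnerProductSpace

lemma Matrix.IsHermitian.pow_card_le_det {n : Type*} [Fintype n] [DecidableEq n]
    {A : Matrix n n ℝ} (hA : A.IsHermitian) {s : ℝ} (hs : 0 ≤ s)
    (h : ∀ x : n → ℝ, s * (x ⬝ᵥ x) ≤ x ⬝ᵥ A *ᵥ x) :
    s ^ Fintype.card n ≤ A.det := by
  have heig : ∀ i, s ≤ hA.eigenvalues i := by
    intro i
    have hunit : ⇑(hA.eigenvectorBasis i) ⬝ᵥ ⇑(hA.eigenvectorBasis i) = 1 := by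
      have hnorm := real_inner_self_eq_norm_sq (hA.eigenvectorBasis i)
      rw [hA.eigenvectorBasis.orthonormal.1 i, EuclideanSpace.inner_eq_star_dotProduct] at hnorm
      simpa using hnorm
    simpa [hA.eigenvalues_eq i, hunit] using h (hA.eigenvectorBasis i)
  rw [hA.det_eq_prod_eigenvalues, ← Finset.card_univ, ← Finset.prod_const]
  exact Finset.prod_le_prod (fun _ _ => hs) fun i _ => heig i

section InnerProductSpace

variable {E F : Type*} [NormedAddCommGroup E] [InnerProductSpace ℝ E]
  [NormedAddCommGroup F] [InnerProductSpace ℝ F]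

lemma pow_le_det_gram_comp_of_orthonormal {ι : Type*} [Fintype ι] [DecidableEq ι]
    {u : ι → E} (hu : Orthonormal ℝ u) (T : E →L[ℝ] F) {t : ℝ} (ht : 0 ≤ t)
    (hT : ∀ w ∈ span ℝ (Set.range u), t * ‖w‖ ≤ ‖T w‖) :
    t ^ (2 * Fintype.card ι) ≤ (gram ℝ (T ∘ u)).det := by
  rw [pow_mul]
  refine (isHermitian_gram ℝ _).pow_card_le_det (by positivity) fun x => ?_
  have hw : ∑ i, x i • u i ∈ span ℝ (Set.range u) :=
    sum_mem fun i _ => smul_mem _ _ (subset_span ⟨i, rfl⟩)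
  have hdot : x ⬝ᵥ x = ‖∑ i, x i • u i‖ ^ 2 := by
    simpa [gram_eq_one_iff_orthonormal.2 hu] using star_dotProduct_gram_mulVec (𝕜 := ℝ) u x x
  have hquad : x ⬝ᵥ gram ℝ (T ∘ u) *ᵥ x = ‖T (∑ i, x i • u i)‖ ^ 2 := by
    simpa using star_dotProduct_gram_mulVec (𝕜 := ℝ) (T ∘ u) x x
  rw [hdot, hquad, ← mul_pow]
  exact pow_le_pow_left₀ (by positivity) (hT _ hw) 2

lemma norm_inv_norm_smul_sub_le {q w : E} (hw : ‖w‖ = 1) :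
    ‖‖q‖⁻¹ • q - w‖ ≤ 2 * ‖q - w‖ := by
  have hnormalize : ‖‖q‖⁻¹ • q - q‖ ≤ ‖q - w‖ := by
    rcases eq_or_ne q 0 with rfl | hq
    · simp
    calc ‖‖q‖⁻¹ • q - q‖ = |(‖q‖⁻¹ - 1) * ‖q‖| := by
          rw [abs_mul, abs_norm, ← Real.norm_eq_abs, ← norm_smul, sub_smul, one_smul]
      _ = |‖w‖ - ‖q‖| := by
          rw [sub_mul, inv_mul_cancel₀ (norm_ne_zero_iff.2 hq), one_mul, hw, abs_sub_comm]
      _ ≤ ‖q - w‖ := by rw [norm_sub_rev]; exact abs_norm_sub_norm_le w q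
  calc ‖‖q‖⁻¹ • q - w‖ ≤ ‖‖q‖⁻¹ • q - q‖ + ‖q - w‖ := norm_sub_le_norm_sub_add_norm_sub _ _ _
    _ ≤ 2 * ‖q - w‖ := by linarith

lemma norm_starProjection_span_sub_le {a b : E} (ha : ‖a‖ = 1) (hb : ‖b‖ = 1) :
    ‖(ℝ ∙ a).starProjection - (ℝ ∙ b).starProjection‖ ≤ 2 * ‖a - b‖ := by
  refine ContinuousLinearMap.opNorm_le_bound _ (by positivity) fun x => ?_
  have hsplit : ((ℝ ∙ a).starProjection - (ℝ ∙ b).starProjection) x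
      = ⟪a, x⟫_ℝ • (a - b) + ⟪a - b, x⟫_ℝ • b := by
    simp only [_root_.sub_apply, starProjection_unit_singleton ℝ ha,
      starProjection_unit_singleton ℝ hb, inner_sub_left]
    module
  calc ‖((ℝ ∙ a).starProjection - (ℝ ∙ b).starProjection) x‖
      ≤ ‖⟪a, x⟫_ℝ • (a - b)‖ + ‖⟪a - b, x⟫_ℝ • b‖ := hsplit ▸ norm_add_le _ _
    _ ≤ ‖a‖ * ‖x‖ * ‖a - b‖ + ‖a - b‖ * ‖x‖ * ‖b‖ := by
        rw [norm_smul, norm_smul]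
        gcongr <;> exact norm_inner_le_norm _ _
    _ = 2 * ‖a - b‖ * ‖x‖ := by rw [ha, hb]; ring

end InnerProductSpace

section Kappa

variable {d : ℕ} {V U V₁ V₂ : Submodule ℝ (EuclideanSpace ℝ (Fin d))}

lemma kappa_le_norm_projL_sub {L₁ L₂ : Submodule ℝ (EuclideanSpace ℝ (Fin d))}
    (h₁ : L₁ ≤ V₁) (hr₁ : Module.finrank ℝ L₁ = 1) (h₂ : L₂ ≤ V₂) (hr₂ : Module.finrank ℝ L₂ = 1) :
    kappa V₁ V₂ ≤ ‖projL L₁ - projL L₂‖ :=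
  ciInf_le ⟨0, Set.forall_mem_range.2 fun _ => norm_nonneg _⟩
    (⟨⟨L₁, h₁, hr₁⟩, ⟨L₂, h₂, hr₂⟩⟩ :
      {L : Submodule ℝ (EuclideanSpace ℝ (Fin d)) // L ≤ V₁ ∧ Module.finrank ℝ L = 1} ×
      {L : Submodule ℝ (EuclideanSpace ℝ (Fin d)) // L ≤ V₂ ∧ Module.finrank ℝ L = 1})

lemma kappa_le_two_mul_norm_sub {a b : EuclideanSpace ℝ (Fin d)} (ha₁ : a ∈ V₁) (hb₂ : b ∈ V₂)
    (ha : ‖a‖ = 1) (hb : ‖b‖ = 1) : kappa V₁ V₂ ≤ 2 * ‖a - b‖ :=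
  (kappa_le_norm_projL_sub ((span_singleton_le_iff_mem a V₁).2 ha₁)
    (finrank_span_singleton (norm_ne_zero_iff.1 (ha ▸ one_ne_zero)))
    ((span_singleton_le_iff_mem b V₂).2 hb₂)
    (finrank_span_singleton (norm_ne_zero_iff.1 (hb ▸ one_ne_zero)))).trans
  (norm_starProjection_span_sub_le ha hb)

lemma kappa_orthogonal_le_four_mul_norm_projL {w : EuclideanSpace ℝ (Fin d)} (hwU : w ∈ U)
    (hw : ‖w‖ = 1) (hwV : w ∉ V) : kappa Vᗮ U ≤ 4 * ‖projL V w‖ := by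
  set q := w - projL V w
  have hqV : q ∈ Vᗮ := sub_starProjection_mem_orthogonal w
  have hq : q ≠ 0 := fun h => hwV (sub_eq_zero.1 h ▸ starProjection_apply_mem V w)
  calc kappa Vᗮ U ≤ 2 * ‖‖q‖⁻¹ • q - w‖ :=
        kappa_le_two_mul_norm_sub (smul_mem _ _ hqV) hwU (norm_smul_inv_norm hq) hw
    _ ≤ 2 * (2 * ‖q - w‖) := by gcongr; exact norm_inv_norm_smul_sub_le hw
    _ = 4 * ‖projL V w‖ := by rw [sub_sub_cancel_left, norm_neg]; ring

lemma min_mul_norm_le_norm_projL {w : EuclideanSpace ℝ (Fin d)} (hwU : w ∈ U) :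
    min (kappa Vᗮ U / 4) 1 * ‖w‖ ≤ ‖projL V w‖ := by
  by_cases hwV : w ∈ V
  · rw [show projL V w = w from starProjection_eq_self_iff.2 hwV]
    exact mul_le_of_le_one_left (norm_nonneg w) (min_le_right _ _)
  have hw : w ≠ 0 := fun h => hwV (h ▸ zero_mem V)
  have hκ := kappa_orthogonal_le_four_mul_norm_projL (smul_mem U ‖w‖⁻¹ hwU)
    (norm_smul_inv_norm hw) (fun h => hwV (by simpa [hw] using smul_mem V ‖w‖ h))
  rw [map_smul, norm_smul, norm_inv, norm_norm] at hκ
  calc min (kappa Vᗮ U / 4) 1 * ‖w‖ ≤ kappa Vᗮ U / 4 * ‖w‖ := by gcongr; exact min_le_left _ _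
    _ ≤ 4 * (‖w‖⁻¹ * ‖projL V w‖) / 4 * ‖w‖ := by gcongr
    _ = ‖projL V w‖ := by field_simp

end Kappa

theorem exists_delta_wedge_proj_ge_general {d m k : ℕ} {ε : ℝ} (hε : 0 < ε) :
    ∃ δ : ℝ, 0 < δ ∧ ∀ V : Submodule ℝ (EuclideanSpace ℝ (Fin d)),
      Module.finrank ℝ V = m →
      ∀ u : Fin k → EuclideanSpace ℝ (Fin d), Orthonormal ℝ u →
        ε ≤ kappa Vᗮ (Submodule.span ℝ (Set.range u)) →
        δ ≤ Real.sqrt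
          (Matrix.of fun i j : Fin k =>
            (inner ℝ (projL V (u i)) (projL V (u j)) : ℝ)).det := by
  set t := min (ε / 4) 1
  have ht : 0 < t := by positivity
  refine ⟨t ^ k, by positivity, fun V _ u hu hκ => ?_⟩
  have hbound : ∀ w ∈ span ℝ (Set.range u), t * ‖w‖ ≤ ‖projL V w‖ := fun w hw =>
    (mul_le_mul_of_nonneg_right (min_le_min_right 1 (by linarith)) (norm_nonneg w)).trans
      (min_mul_norm_le_norm_projL hw)
  have hdet := pow_le_det_gram_comp_of_orthonormal hu (projL V) ht.le hbound
  rw [Fintype.card_fin, mul_comm, pow_mul] at hdet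
  exact Real.le_sqrt_of_sq_le hdet

/-- For `1 ≤ k ≤ m ≤ d` and `ε > 0` there is `δ = δ(ε) > 0` such that for every
`V ∈ Gr_m(d)` and every orthonormal set `{u_1,...,u_k}` with
`κ(V^⊥, span{u_1,...,u_k}) ≥ ε`, one has `‖Λ^k π_V (u_1 ∧ ... ∧ u_k)‖ ≥ δ`; here the
norm of the wedge `(P_V u_1) ∧ ... ∧ (P_V u_k)` equals the square root of the Gram
determinant `det(⟨P_V u_i, P_V u_j⟩)_{i,j}`. -/
theorem exists_delta_wedge_proj_ge {d m k : ℕ} (hk : 1 ≤ k) (hkm : k ≤ m) (hmd : m ≤ d)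
    {ε : ℝ} (hε : 0 < ε) :
    ∃ δ : ℝ, 0 < δ ∧ ∀ V : Submodule ℝ (EuclideanSpace ℝ (Fin d)),
      Module.finrank ℝ V = m →
      ∀ u : Fin k → EuclideanSpace ℝ (Fin d), Orthonormal ℝ u →
        ε ≤ kappa Vᗮ (Submodule.span ℝ (Set.range u)) →
        δ ≤ Real.sqrt
          (Matrix.of fun i j : Fin k =>
            (inner ℝ (projL V (u i)) (projL V (u j)) : ℝ)).det :=
  exists_delta_wedge_proj_ge_general hε
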